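/- arXiv:1310.6510 — 2 statements merged into one kernel-verified Lean document; each statement's English description precedes it below -/
import Mathlib

section
/- Separation lemma: If X is a compact topological (metric) space and A, B are nonempty closed subsets of X that are not separated (i.e., there is no decomposition of X into disjoint open sets U, V with A ⊆ U and B ⊆ V and U ∪ V = X), then A and B are connected in X: there exists a connected subset Y of X with Y ∩ A ≠ ∅ and Y ∩ B ≠ ∅. -/
/-!
In a compact Hausdorff space the connected component of a point is the intersection of its clopen
neighbourhoods. If no connected set meets both `A` and `B`, every `a ∈ A` and `b ∈ B` are therefore
split by a clopen set; compactness of `B`, then of `A`, assembles these into a single clopen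
`U ⊇ A` missing `B`, and `U`, `Uᶜ` separate `A` from `B`.
-/

open Set

theorem IsCompact.exists_isClopen_superset_disjoint {X : Type*} [TopologicalSpace X]
    {K S : Set X} (hK : IsCompact K)
    (h : ∀ x ∈ K, ∃ W, IsClopen W ∧ x ∈ W ∧ Disjoint W S) :
    ∃ W, IsClopen W ∧ K ⊆ W ∧ Disjoint W S := by
  refine hK.induction_on (p := fun s => ∃ W, IsClopen W ∧ s ⊆ W ∧ Disjoint W S)
    ⟨∅, isClopen_empty, empty_subset _, empty_disjoint _⟩ ?_ ?_ ?_
  · rintro s t hst ⟨W, hW, htW, hWS⟩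
    exact ⟨W, hW, hst.trans htW, hWS⟩
  · rintro s t ⟨W₁, hW₁, hsW₁, hW₁S⟩ ⟨W₂, hW₂, htW₂, hW₂S⟩
    exact ⟨W₁ ∪ W₂, hW₁.union hW₂, union_subset_union hsW₁ htW₂, hW₁S.union_left hW₂S⟩
  · intro x hx
    obtain ⟨W, hW, hxW, hWS⟩ := h x hx
    exact ⟨W, mem_nhdsWithin_of_mem_nhds (hW.isOpen.mem_nhds hxW), W, hW, subset_rfl, hWS⟩

section CompactHausdorff

variable {X : Type*} [TopologicalSpace X] [T2Space X] [CompactSpace X]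

theorem exists_isClopen_mem_notMem_of_notMem_connectedComponent {x y : X}
    (h : y ∉ connectedComponent x) : ∃ W, IsClopen W ∧ x ∈ W ∧ y ∉ W := by
  rw [connectedComponent_eq_iInter_isClopen, mem_iInter] at h
  obtain ⟨⟨W, hW, hxW⟩, hyW⟩ := not_forall.1 h
  exact ⟨W, hW, hxW, hyW⟩

theorem exists_isClopen_superset_disjoint_of_disjoint_connectedComponent {A B : Set X}
    (hA : IsClosed A) (hB : IsClosed B) (h : ∀ b ∈ B, Disjoint (connectedComponent b) A) :
    ∃ U, IsClopen U ∧ A ⊆ U ∧ Disjoint U B := by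
  refine hA.isCompact.exists_isClopen_superset_disjoint fun a ha => ?_
  obtain ⟨C, hC, hBC, haC⟩ : ∃ C, IsClopen C ∧ B ⊆ C ∧ Disjoint C {a} := by
    refine hB.isCompact.exists_isClopen_superset_disjoint fun b hb => ?_
    obtain ⟨W, hW, hbW, haW⟩ :=
      exists_isClopen_mem_notMem_of_notMem_connectedComponent (disjoint_right.1 (h b hb) ha)
    exact ⟨W, hW, hbW, disjoint_singleton_right.2 haW⟩
  exact ⟨Cᶜ, hC.compl, disjoint_singleton_right.1 haC, disjoint_compl_left_iff_subset.2 hBC⟩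

end CompactHausdorff

theorem stmt_14 {X : Type*} [MetricSpace X] [CompactSpace X]
    (A B : Set X) (hA : IsClosed A) (hB : IsClosed B)
    (hAne : A.Nonempty) (hBne : B.Nonempty)
    (hsep : ¬ ∃ U V : Set X, IsOpen U ∧ IsOpen V ∧ U.Nonempty ∧ V.Nonempty ∧
      Disjoint U V ∧ U ∪ V = Set.univ ∧ A ⊆ U ∧ B ⊆ V) :
    ∃ Y : Set X, IsConnected Y ∧ (Y ∩ A).Nonempty ∧ (Y ∩ B).Nonempty := by
  by_contra hcon
  have hcomp : ∀ b ∈ B, Disjoint (connectedComponent b) A := fun b hb =>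
    disjoint_left.2 fun a hab haA =>
      hcon ⟨_, isConnected_connectedComponent, ⟨a, hab, haA⟩, ⟨b, mem_connectedComponent, hb⟩⟩
  obtain ⟨U, hU, hAU, hUB⟩ :=
    exists_isClopen_superset_disjoint_of_disjoint_connectedComponent hA hB hcomp
  have hBU : B ⊆ Uᶜ := subset_compl_iff_disjoint_left.2 hUB
  exact hsep ⟨U, Uᶜ, hU.isOpen, hU.compl.isOpen, hAne.mono hAU, hBne.mono hBU,
    disjoint_compl_right, union_compl_self U, hAU, hBU⟩
end

section
/- Dugundji extension theorem (special case): Let E be a normed space, C ⊆ E a closed subset, X a normed space, K ⊆ X convex, and f : C → K continuous. Then there exists a continuous map F : E → K extending f (F(u) = f(u) for all u ∈ C). -/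
/-!
For `z ∉ C` consider the set of values `v ∈ K` that are at least as close to `f x`, for every
`x ∈ C`, as `f` is on the points of `C` within distance `6 * dist z x` of `x`. It is convex,
being `K` intersected with closed balls. Near `z ∉ C` it contains the constant `f c` for any
`c ∈ C` with `dist z c < 2 * infDist z C`, so partitions of unity on the paracompact space `Cᶜ`
give a continuous selection `g`. Gluing `f` on `C` with `g` on `Cᶜ` gives the extension:
at `x ∈ C` the selection is controlled by the modulus of continuity of `f` at `x`.
-/

open Set Metric Topology

section Extend

variable {E X : Type*} {C : Set E} {f : E → X}

open Classical in
variable (C) in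
noncomputable def extendByCompl (f : E → X) (g : ↥Cᶜ → X) (z : E) : X :=
  if h : z ∈ C then f z else g ⟨z, h⟩

theorem extendByCompl_of_mem {g : ↥Cᶜ → X} {z : E} (hz : z ∈ C) :
    extendByCompl C f g z = f z := by
  rw [extendByCompl, dif_pos hz]

theorem extendByCompl_of_notMem {g : ↥Cᶜ → X} {z : E} (hz : z ∉ C) :
    extendByCompl C f g z = g ⟨z, hz⟩ := by
  rw [extendByCompl, dif_neg hz]

theorem extendByCompl_mem {g : ↥Cᶜ → X} {s : Set X} (hf : ∀ u ∈ C, f u ∈ s)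
    (hg : ∀ z, g z ∈ s) (z : E) : extendByCompl C f g z ∈ s := by
  by_cases hz : z ∈ C
  · exact extendByCompl_of_mem (g := g) hz ▸ hf z hz
  · exact extendByCompl_of_notMem (f := f) hz ▸ hg _

theorem continuousOn_extendByCompl [TopologicalSpace E] [TopologicalSpace X] {g : ↥Cᶜ → X}
    (hg : Continuous g) : ContinuousOn (extendByCompl C f g) Cᶜ := by
  rw [continuousOn_iff_continuous_domRestrict]
  convert hg using 1
  funext z
  exact extendByCompl_of_notMem z.2

end Extend

section Dugundji

variable {E X : Type*} [PseudoMetricSpace E] [SeminormedAddCommGroup X]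
  {C : Set E} {K : Set X} {f : E → X}

theorem dist_lt_six_mul_dist_of_lt_infDist {x y z c : E} (hx : x ∈ C)
    (hc : dist y c < 2 * infDist y C) (hz : dist z y < infDist y C / 2) :
    dist c x < 6 * dist z x := by
  have hyx : infDist y C ≤ dist y x := infDist_le_dist_of_mem hx
  have hzy := dist_comm z y ▸ hz
  calc dist c x ≤ dist c y + dist y z + dist z x := dist_triangle4 _ _ _ _
    _ < 6 * dist z x := by
      rw [dist_comm c y]
      linarith [dist_triangle y z x]

variable (C K f) in
def dugundjiValues (z : E) : Set X :=
  K ∩ ⋂ x ∈ C, ⋂ ε ∈ {ε : ℝ | ∀ y ∈ C, dist y x < 6 * dist z x → dist (f y) (f x) ≤ ε},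
    closedBall (f x) ε

theorem convex_dugundjiValues [NormedSpace ℝ X] (hK : Convex ℝ K) (z : E) :
    Convex ℝ (dugundjiValues C K f z) :=
  hK.inter <| convex_iInter₂ fun _ _ => convex_iInter₂ fun _ _ => convex_closedBall _ _

theorem dist_le_of_mem_dugundjiValues {x z : E} {v : X} {ε : ℝ}
    (hv : v ∈ dugundjiValues C K f z) (hx : x ∈ C)
    (hε : ∀ y ∈ C, dist y x < 6 * dist z x → dist (f y) (f x) ≤ ε) : dist v (f x) ≤ ε := by
  have hv := hv.2
  simp only [mem_iInter] at hv
  exact hv x hx ε hε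

theorem exists_eventually_mem_dugundjiValues (hC : IsClosed C) (hCne : C.Nonempty)
    (hfK : ∀ u ∈ C, f u ∈ K) {z : E} (hz : z ∉ C) :
    ∃ v, ∀ᶠ z' in 𝓝 z, v ∈ dugundjiValues C K f z' := by
  have hr : 0 < infDist z C := (hC.notMem_iff_infDist_pos hCne).mp hz
  obtain ⟨c, hcC, hzc⟩ := (infDist_lt_iff hCne).mp (by linarith : infDist z C < 2 * infDist z C)
  refine ⟨f c, Filter.eventually_of_mem (ball_mem_nhds z (half_pos hr))
    fun z' hz' => ⟨hfK c hcC, ?_⟩⟩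
  simp only [mem_iInter]
  exact fun x hx ε hε => hε c hcC (dist_lt_six_mul_dist_of_lt_infDist hx hzc hz')

theorem exists_continuous_forall_mem_dugundjiValues [NormedSpace ℝ X] (hC : IsClosed C)
    (hCne : C.Nonempty) (hK : Convex ℝ K) (hfK : ∀ u ∈ C, f u ∈ K) :
    ∃ g : C(↥Cᶜ, X), ∀ z : ↥Cᶜ, g z ∈ dugundjiValues C K f (z : E) :=
  exists_continuous_forall_mem_convex_of_local_const (fun _ => convex_dugundjiValues hK _)
    fun z =>
      let ⟨v, hv⟩ := exists_eventually_mem_dugundjiValues hC hCne hfK z.2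
      ⟨v, continuous_subtype_val.continuousAt.eventually hv⟩

theorem continuousAt_extendByCompl_of_mem {g : ↥Cᶜ → X}
    (hg : ∀ z : ↥Cᶜ, g z ∈ dugundjiValues C K f (z : E)) {x : E} (hx : x ∈ C)
    (hf : ContinuousWithinAt f C x) : ContinuousAt (extendByCompl C f g) x := by
  rw [Metric.continuousAt_iff]
  intro ε hε
  obtain ⟨δ, hδ, hfδ⟩ := Metric.continuousWithinAt_iff.mp hf (ε / 2) (half_pos hε)
  refine ⟨δ / 6, by positivity, fun {z} hzx => ?_⟩
  rw [extendByCompl_of_mem hx]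
  by_cases hz : z ∈ C
  · rw [extendByCompl_of_mem hz]
    linarith [hfδ hz (by linarith : dist z x < δ)]
  · rw [extendByCompl_of_notMem hz]
    have hle : dist (g ⟨z, hz⟩) (f x) ≤ ε / 2 :=
      dist_le_of_mem_dugundjiValues (hg ⟨z, hz⟩) hx fun y hy hyx => (hfδ hy (by linarith)).le
    linarith

theorem continuous_extendByCompl {g : ↥Cᶜ → X} (hC : IsClosed C) (hf : ContinuousOn f C)
    (hgc : Continuous g) (hg : ∀ z : ↥Cᶜ, g z ∈ dugundjiValues C K f (z : E)) :
    Continuous (extendByCompl C f g) := by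
  refine continuous_iff_continuousAt.mpr fun x => ?_
  by_cases hx : x ∈ C
  · exact continuousAt_extendByCompl_of_mem hg hx (hf x hx)
  · exact (continuousOn_extendByCompl hgc).continuousAt (hC.isOpen_compl.mem_nhds hx)

end Dugundji

theorem stmt_15_general {E X : Type*} [NormedAddCommGroup E]
    [NormedAddCommGroup X] [NormedSpace ℝ X]
    (C : Set E) (hC : IsClosed C) (hCne : C.Nonempty)
    (K : Set X) (hK : Convex ℝ K)
    (f : E → X) (hf : ContinuousOn f C) (hfK : ∀ u ∈ C, f u ∈ K) :
    ∃ F : E → X, Continuous F ∧ (∀ u ∈ C, F u = f u) ∧ (∀ u : E, F u ∈ K) := by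
  obtain ⟨g, hg⟩ := exists_continuous_forall_mem_dugundjiValues hC hCne hK hfK
  exact ⟨extendByCompl C f g, continuous_extendByCompl hC hf g.continuous hg,
    fun u hu => extendByCompl_of_mem hu, extendByCompl_mem hfK fun z => (hg z).1⟩

theorem stmt_15 {E X : Type*} [NormedAddCommGroup E] [NormedSpace ℝ E]
    [NormedAddCommGroup X] [NormedSpace ℝ X]
    (C : Set E) (hC : IsClosed C) (hCne : C.Nonempty)
    (K : Set X) (hK : Convex ℝ K) (hKne : K.Nonempty)
    (f : E → X) (hf : ContinuousOn f C) (hfK : ∀ u ∈ C, f u ∈ K) :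
    ∃ F : E → X, Continuous F ∧ (∀ u ∈ C, F u = f u) ∧ (∀ u : E, F u ∈ K) :=
  stmt_15_general C hC hCne K hK f hf hfK
end
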